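/- In the setting of the complete metric space (W, Δ) of admissible controls, assume in addition that l : ℝⁿ → ℝ is Lipschitz of rank k_l on the ε-ball around x*(b), and that h : [a,b] × ℝⁿ → ℝ satisfies: for every x ∈ ℝⁿ the function t ↦ h(t,x) is continuous on [a,b], and there is k_h > 0 such that x ↦ h(t,x) is Lipschitz of rank k_h for every t ∈ [a,b]. For i ∈ ℕ define J_i(u) := l(x_u(b)) + i ∫_a^b h⁺(t, x_u(t)) dt, where h⁺(t,x) := max{0, h(t,x)}. Then J_i is Lipschitz continuous on (W, Δ); more precisely, |J_i(u) − J_i(v)| ≤ (k_l + i k_h (b−a)) e^{k_x(b−a)} k_u Δ(u,v) for all u, v ∈ W. -/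

import Mathlib

/-
Subtracting the integral equations of the two trajectories and using the Lipschitz bound on `f`
gives `‖x_u(t) - x_v(t)‖ ≤ k_x ∫_a^t ‖x_u - x_v‖ + k_u Δ(u,v)`, so Grönwall's inequality yields
`‖x_u - x_v‖ ≤ k_u e^{k_x(b-a)} Δ(u,v)` uniformly on `[a,b]`. Since `max 0 ·` is 1-Lipschitz, the
terminal cost and the penalty integrand are Lipschitz in the state with ranks `k_l` and `k_h`, and
the uniform bound turns into the stated one.
-/

open MeasureTheory Set Filter

noncomputable section

/-- Shorthand for Euclidean space `ℝⁿ`. -/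
abbrev Vec (n : ℕ) := EuclideanSpace ℝ (Fin n)

/-- Membership in the set `W` of admissible controls, together with the associated
trajectory `x` of `ẋ = f(t,x,u(t))`, `x(a) = x_a` (encoded via an integrable derivative
`x'` and the integral representation), staying in the `ε`-tube around `x*` with
`x(b) ∈ E_b`. -/
def InW {n k : ℕ} (a b : ℝ) (f : ℝ → Vec n → Vec k → Vec n) (U : ℝ → Set (Vec k))
    (xa : Vec n) (Eb : Set (Vec n)) (xstar : ℝ → Vec n) (ε : ℝ)
    (u : ℝ → Vec k) (x x' : ℝ → Vec n) : Prop :=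
  AEStronglyMeasurable u (volume.restrict (Icc a b)) ∧
  (∀ᵐ t ∂(volume.restrict (Icc a b)), u t ∈ U t) ∧
  IntegrableOn x' (Icc a b) ∧
  x a = xa ∧
  (∀ t ∈ Icc a b, x t = xa + ∫ s in a..t, x' s) ∧
  (∀ᵐ t ∂(volume.restrict (Icc a b)), x' t = f t (x t) (u t)) ∧
  (∀ t ∈ Icc a b, ‖x t - xstar t‖ ≤ ε) ∧
  x b ∈ Eb

open Topology
open scoped NNReal

theorem mul_gronwallBound_zero_add (K C x : ℝ) :
    K * gronwallBound 0 K C x + C = C * Real.exp (K * x) := by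
  rcases eq_or_ne K 0 with rfl | hK
  · simp
  · rw [gronwallBound_of_K_ne_0 hK]
    field_simp
    ring

theorem le_mul_exp_of_le_mul_integral_add {w : ℝ → ℝ} {a b K C : ℝ} (hK : 0 ≤ K)
    (hw : ContinuousOn w (Icc a b))
    (hbound : ∀ t ∈ Icc a b, w t ≤ K * (∫ s in a..t, w s) + C) :
    ∀ t ∈ Icc a b, w t ≤ C * Real.exp (K * (t - a)) := by
  intro t ht
  have hab : a ≤ b := ht.1.trans ht.2
  have hw_int : IntegrableOn w (Icc a b) := hw.integrableOn_compact isCompact_Icc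
  have hprim : ContinuousOn (fun t => ∫ s in a..t, w s) (Icc a b) := by
    simpa only [uIcc_of_le hab] using
      intervalIntegral.continuousOn_primitive_interval (a := a) (b := b)
        (by rwa [uIcc_of_le hab])
  have hderiv : ∀ t ∈ Ico a b, HasDerivWithinAt (fun t => ∫ s in a..t, w s) (w t) (Ici t) t := by
    intro t ht
    have hmem : Icc a b ∈ 𝓝[>] t := Icc_mem_nhdsGT_of_mem ht
    exact intervalIntegral.integral_hasDerivWithinAt_right
      ((intervalIntegrable_iff_integrableOn_Icc_of_le ht.1).2
        (hw_int.mono_set (Icc_subset_Icc le_rfl ht.2.le)))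
      ⟨Icc a b, hmem, hw.aestronglyMeasurable measurableSet_Icc⟩
      ((hw t (Ico_subset_Icc_self ht)).mono_of_mem_nhdsWithin hmem)
  have hprim_le := le_gronwallBound_of_liminf_deriv_right_le (δ := 0) hprim
    (fun s hs _ hr => (hderiv s hs).liminf_right_slope_le hr) (by simp)
    (fun s hs => hbound s (Ico_subset_Icc_self hs)) t ht
  calc w t ≤ K * (∫ s in a..t, w s) + C := hbound t ht
    _ ≤ K * gronwallBound 0 K C (t - a) + C := by gcongr
    _ = C * Real.exp (K * (t - a)) := mul_gronwallBound_zero_add K C (t - a)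

section Trajectories

variable {E : Type*} [NormedAddCommGroup E] [NormedSpace ℝ E]

theorem continuousOn_of_eq_add_integral {a b : ℝ} {x₀ : E} {x x' : ℝ → E} (hab : a ≤ b)
    (hx' : IntegrableOn x' (Icc a b)) (hx : ∀ t ∈ Icc a b, x t = x₀ + ∫ s in a..t, x' s) :
    ContinuousOn x (Icc a b) := by
  have hprim : ContinuousOn (fun t => x₀ + ∫ s in a..t, x' s) (Icc a b) := by
    refine continuousOn_const.add ?_
    simpa only [uIcc_of_le hab] using
      intervalIntegral.continuousOn_primitive_interval (a := a) (b := b)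
        (by rwa [uIcc_of_le hab])
  exact hprim.congr hx

theorem norm_sub_le_mul_integral_add {a b K : ℝ} {x₀ : E} {x x' y y' : ℝ → E} {g : ℝ → ℝ}
    (hx' : IntegrableOn x' (Icc a b)) (hy' : IntegrableOn y' (Icc a b))
    (hx : ∀ t ∈ Icc a b, x t = x₀ + ∫ s in a..t, x' s)
    (hy : ∀ t ∈ Icc a b, y t = x₀ + ∫ s in a..t, y' s)
    (hg : IntegrableOn g (Icc a b)) (hg0 : ∀ t, 0 ≤ g t)
    (hxy' : ∀ᵐ t ∂volume.restrict (Icc a b), ‖x' t - y' t‖ ≤ K * ‖x t - y t‖ + g t) :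
    ∀ t ∈ Icc a b, ‖x t - y t‖ ≤ K * (∫ s in a..t, ‖x s - y s‖) + ∫ s in a..b, g s := by
  intro t ht
  have hsub : Icc a t ⊆ Icc a b := Icc_subset_Icc le_rfl ht.2
  have hint {φ : ℝ → E} (hφ : IntegrableOn φ (Icc a b)) : IntervalIntegrable φ volume a t :=
    (intervalIntegrable_iff_integrableOn_Icc_of_le ht.1).2 (hφ.mono_set hsub)
  have hw : IntervalIntegrable (fun s => ‖x s - y s‖) volume a t := by
    have hab : a ≤ b := ht.1.trans ht.2
    refine ContinuousOn.intervalIntegrable ?_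
    rw [uIcc_of_le ht.1]
    exact (((continuousOn_of_eq_add_integral hab hx' hx).sub
      (continuousOn_of_eq_add_integral hab hy' hy)).norm).mono hsub
  have hg_t : IntervalIntegrable g volume a t :=
    (intervalIntegrable_iff_integrableOn_Icc_of_le ht.1).2 (hg.mono_set hsub)
  have hdiff : x t - y t = ∫ s in a..t, (x' s - y' s) := by
    rw [hx t ht, hy t ht, intervalIntegral.integral_sub (hint hx') (hint hy')]
    abel
  calc ‖x t - y t‖ ≤ ∫ s in a..t, ‖x' s - y' s‖ :=
        hdiff ▸ intervalIntegral.norm_integral_le_integral_norm ht.1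
    _ ≤ ∫ s in a..t, (K * ‖x s - y s‖ + g s) :=
        intervalIntegral.integral_mono_ae_restrict ht.1 ((hint hx').sub (hint hy')).norm
          ((hw.const_mul K).add hg_t) (ae_restrict_of_ae_restrict_of_subset hsub hxy')
    _ = K * (∫ s in a..t, ‖x s - y s‖) + ∫ s in a..t, g s := by
        rw [intervalIntegral.integral_add (hw.const_mul K) hg_t,
          intervalIntegral.integral_const_mul]
    _ ≤ K * (∫ s in a..t, ‖x s - y s‖) + ∫ s in a..b, g s := by
        gcongr
        exact intervalIntegral.integral_mono_interval le_rfl ht.1 ht.2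
          (Eventually.of_forall hg0)
          ((intervalIntegrable_iff_integrableOn_Icc_of_le (ht.1.trans ht.2)).2 hg)

theorem norm_sub_le_integral_mul_exp {a b K : ℝ} {x₀ : E} {x x' y y' : ℝ → E} {g : ℝ → ℝ}
    (hK : 0 ≤ K) (hx' : IntegrableOn x' (Icc a b)) (hy' : IntegrableOn y' (Icc a b))
    (hx : ∀ t ∈ Icc a b, x t = x₀ + ∫ s in a..t, x' s)
    (hy : ∀ t ∈ Icc a b, y t = x₀ + ∫ s in a..t, y' s)
    (hg : IntegrableOn g (Icc a b)) (hg0 : ∀ t, 0 ≤ g t)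
    (hxy' : ∀ᵐ t ∂volume.restrict (Icc a b), ‖x' t - y' t‖ ≤ K * ‖x t - y t‖ + g t) :
    ∀ t ∈ Icc a b, ‖x t - y t‖ ≤ (∫ s in a..b, g s) * Real.exp (K * (b - a)) := by
  intro t ht
  have hab : a ≤ b := ht.1.trans ht.2
  have hcont : ContinuousOn (fun t => ‖x t - y t‖) (Icc a b) :=
    ((continuousOn_of_eq_add_integral hab hx' hx).sub
      (continuousOn_of_eq_add_integral hab hy' hy)).norm
  have hg_nonneg : 0 ≤ ∫ s in a..b, g s := intervalIntegral.integral_nonneg hab fun s _ => hg0 s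
  calc ‖x t - y t‖ ≤ (∫ s in a..b, g s) * Real.exp (K * (t - a)) :=
        le_mul_exp_of_le_mul_integral_add hK hcont
          (norm_sub_le_mul_integral_add hx' hy' hx hy hg hg0 hxy') t ht
    _ ≤ (∫ s in a..b, g s) * Real.exp (K * (b - a)) := by gcongr; exact ht.2

end Trajectories

theorem InW.norm_sub_le_mul_integral_mul_exp {n k : ℕ} {a b : ℝ} {f : ℝ → Vec n → Vec k → Vec n}
    {U : ℝ → Set (Vec k)} {xa : Vec n} {Eb : Set (Vec n)} {xstar : ℝ → Vec n} {ε kx ku c : ℝ}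
    {u v : ℝ → Vec k} {xu xu' xv xv' : ℝ → Vec n} (hkx : 0 ≤ kx) (hku : 0 ≤ ku)
    (hflip : ∀ᵐ t ∂(volume.restrict (Icc a b)), ∀ x₁ x₂ : Vec n, ∀ u₁ ∈ U t, ∀ u₂ ∈ U t,
      ‖f t x₁ u₁ - f t x₂ u₂‖ ≤ kx * ‖x₁ - x₂‖ + ku * ‖u₁ - u₂‖)
    (hbdd : ∀ᵐ t ∂(volume.restrict (Icc a b)), ∀ w ∈ U t, ‖w‖ ≤ c)
    (hu : InW a b f U xa Eb xstar ε u xu xu') (hv : InW a b f U xa Eb xstar ε v xv xv') :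
    ∀ t ∈ Icc a b,
      ‖xu t - xv t‖ ≤ ku * (∫ s in a..b, ‖u s - v s‖) * Real.exp (kx * (b - a)) := by
  obtain ⟨humeas, huU, huint, -, hurep, huode, -, -⟩ := hu
  obtain ⟨hvmeas, hvU, hvint, -, hvrep, hvode, -, -⟩ := hv
  have huv : IntegrableOn (fun t => ‖u t - v t‖) (Icc a b) := by
    refine .of_bound measure_Icc_lt_top (humeas.sub hvmeas).norm (c + c) ?_
    filter_upwards [huU, hvU, hbdd] with t hut hvt hc
    rw [norm_norm]
    exact (norm_sub_le _ _).trans (add_le_add (hc _ hut) (hc _ hvt))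
  have hderiv : ∀ᵐ t ∂volume.restrict (Icc a b),
      ‖xu' t - xv' t‖ ≤ kx * ‖xu t - xv t‖ + ku * ‖u t - v t‖ := by
    filter_upwards [huU, hvU, huode, hvode, hflip] with t hut hvt hxu hxv hf
    rw [hxu, hxv]
    exact hf _ _ _ hut _ hvt
  intro t ht
  simpa only [intervalIntegral.integral_const_mul] using
    norm_sub_le_integral_mul_exp hkx huint hvint hurep hvrep (huv.const_mul ku)
      (fun s => mul_nonneg hku (norm_nonneg _)) hderiv t ht

theorem continuousOn_apply_of_continuousOn_of_lipschitzWith {α E F : Type*} [TopologicalSpace α]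
    [PseudoEMetricSpace E] [PseudoEMetricSpace F] {h : α → E → F} {s : Set α} {x : α → E}
    {K : ℝ≥0} (hht : ∀ z, ContinuousOn (fun t => h t z) s) (hhx : ∀ t ∈ s, LipschitzWith K (h t))
    (hx : ContinuousOn x s) : ContinuousOn (fun t => h t (x t)) s :=
  (continuousOn_prod_of_continuousOn_lipschitzOnWith' (fun p : α × E => h p.1 p.2) (t := univ) K
    (fun t ht => (hhx t ht).lipschitzOnWith) fun z _ => hht z).comp
    (continuousOn_id.prodMk hx) fun _ ht => ⟨ht, mem_univ _⟩

theorem abs_integral_max_zero_sub_le {E : Type*} [PseudoMetricSpace E] {a b M : ℝ} {K : ℝ≥0}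
    {h : ℝ → E → ℝ} {x y : ℝ → E} (hab : a ≤ b)
    (hht : ∀ z, ContinuousOn (fun t => h t z) (Icc a b))
    (hhx : ∀ t ∈ Icc a b, LipschitzWith K (h t))
    (hx : ContinuousOn x (Icc a b)) (hy : ContinuousOn y (Icc a b))
    (hxy : ∀ t ∈ Icc a b, dist (x t) (y t) ≤ M) :
    |(∫ t in a..b, max 0 (h t (x t))) - ∫ t in a..b, max 0 (h t (y t))| ≤ K * M * (b - a) := by
  have hint {z : ℝ → E} (hz : ContinuousOn z (Icc a b)) :
      IntervalIntegrable (fun t => max 0 (h t (z t))) volume a b := by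
    refine ContinuousOn.intervalIntegrable ?_
    rw [uIcc_of_le hab]
    exact continuousOn_const.sup (continuousOn_apply_of_continuousOn_of_lipschitzWith hht hhx hz)
  rw [← intervalIntegral.integral_sub (hint hx) (hint hy), ← Real.norm_eq_abs,
    ← abs_of_nonneg (sub_nonneg.2 hab)]
  refine intervalIntegral.norm_integral_le_of_norm_le_const fun t ht => ?_
  have ht' : t ∈ Icc a b := Ioc_subset_Icc_self (uIoc_of_le hab ▸ ht)
  calc |max 0 (h t (x t)) - max 0 (h t (y t))| ≤ |h t (x t) - h t (y t)| := by
        simpa only [max_comm (0 : ℝ)] using abs_max_sub_max_le_abs _ _ 0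
    _ ≤ K * dist (x t) (y t) := (hhx t ht').dist_le_mul _ _
    _ ≤ K * M := by gcongr; exact hxy t ht'

theorem penalized_cost_lipschitz_general
    {n k : ℕ} (a b : ℝ) (hab : a < b)
    (f : ℝ → Vec n → Vec k → Vec n) (U : ℝ → Set (Vec k))
    (kx ku : ℝ) (hkx : 0 ≤ kx) (hku : 0 ≤ ku)
    (hflip : ∀ᵐ t ∂(volume.restrict (Icc a b)), ∀ x₁ x₂ : Vec n, ∀ u₁ ∈ U t, ∀ u₂ ∈ U t,
      ‖f t x₁ u₁ - f t x₂ u₂‖ ≤ kx * ‖x₁ - x₂‖ + ku * ‖u₁ - u₂‖)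
    (c : ℝ)
    (hbdd : ∀ᵐ t ∂(volume.restrict (Icc a b)), ∀ w ∈ U t, ‖w‖ ≤ c)
    (xa : Vec n) (Eb : Set (Vec n))
    (xstar : ℝ → Vec n)
    (ε : ℝ)
    -- `l` is Lipschitz of rank `k_l` on the `ε`-ball around `x*(b)`
    (l : Vec n → ℝ) (kl : ℝ) (hkl : 0 ≤ kl)
    (hl : ∀ y z : Vec n, ‖y - xstar b‖ ≤ ε → ‖z - xstar b‖ ≤ ε →
      |l y - l z| ≤ kl * ‖y - z‖)
    -- assumption (A3) on `h`
    (h : ℝ → Vec n → ℝ) (kh : ℝ) (hkh : 0 < kh)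
    (hht : ∀ x : Vec n, ContinuousOn (fun t => h t x) (Icc a b))
    (hhx : ∀ t ∈ Icc a b, LipschitzWith (Real.toNNReal kh) (fun x : Vec n => h t x))
    (i : ℕ)
    -- two elements of `W` with their trajectories
    (u v : ℝ → Vec k) (xu xu' xv xv' : ℝ → Vec n)
    (hu : InW a b f U xa Eb xstar ε u xu xu')
    (hv : InW a b f U xa Eb xstar ε v xv xv') :
    |(l (xu b) + (i : ℝ) * ∫ t in a..b, max 0 (h t (xu t))) -
      (l (xv b) + (i : ℝ) * ∫ t in a..b, max 0 (h t (xv t)))| ≤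
      (kl + (i : ℝ) * kh * (b - a)) * Real.exp (kx * (b - a)) * ku *
        ∫ t in a..b, ‖u t - v t‖ := by
  set M := ku * (∫ t in a..b, ‖u t - v t‖) * Real.exp (kx * (b - a))
  have hdist : ∀ t ∈ Icc a b, ‖xu t - xv t‖ ≤ M :=
    hu.norm_sub_le_mul_integral_mul_exp hkx hku hflip hbdd hv
  obtain ⟨-, -, huint, -, hurep, -, hutube, -⟩ := hu
  obtain ⟨-, -, hvint, -, hvrep, -, hvtube, -⟩ := hv
  have hb : b ∈ Icc a b := ⟨hab.le, le_rfl⟩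
  have hterminal : |l (xu b) - l (xv b)| ≤ kl * M :=
    (hl _ _ (hutube b hb) (hvtube b hb)).trans (by gcongr; exact hdist b hb)
  have hpenalty : |(∫ t in a..b, max 0 (h t (xu t))) - ∫ t in a..b, max 0 (h t (xv t))| ≤
      kh * M * (b - a) := by
    simpa only [Real.coe_toNNReal kh hkh.le] using
      abs_integral_max_zero_sub_le hab.le hht hhx
        (continuousOn_of_eq_add_integral hab.le huint hurep)
        (continuousOn_of_eq_add_integral hab.le hvint hvrep)
        fun t ht => (dist_eq_norm _ _).trans_le (hdist t ht)
  calc _ = |(l (xu b) - l (xv b)) + (i : ℝ) * ((∫ t in a..b, max 0 (h t (xu t))) -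
          ∫ t in a..b, max 0 (h t (xv t)))| := by congr 1; ring
    _ ≤ |l (xu b) - l (xv b)| + (i : ℝ) * |(∫ t in a..b, max 0 (h t (xu t))) -
          ∫ t in a..b, max 0 (h t (xv t))| :=
        (abs_add_le _ _).trans_eq (by rw [abs_mul, Nat.abs_cast])
    _ ≤ kl * M + (i : ℝ) * (kh * M * (b - a)) :=
        add_le_add hterminal (mul_le_mul_of_nonneg_left hpenalty i.cast_nonneg)
    _ = _ := by ring

/-- the penalized cost `J_i(u) = l(x_u(b)) + i ∫_a^b h⁺(t, x_u(t)) dt` is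
Lipschitz on `(W, Δ)`: `|J_i(u) - J_i(v)| ≤ (k_l + i k_h (b-a)) e^{k_x(b-a)} k_u Δ(u,v)`,
where `Δ(u,v) = ∫_a^b |u - v| dt` and `h⁺(t,x) = max{0, h(t,x)}`. -/
theorem penalized_cost_lipschitz
    {n k : ℕ} (a b : ℝ) (hab : a < b)
    (f : ℝ → Vec n → Vec k → Vec n) (U : ℝ → Set (Vec k))
    (kx ku : ℝ) (hkx : 0 ≤ kx) (hku : 0 ≤ ku)
    (hfmeas : Measurable fun q : ℝ × Vec n × Vec k => f q.1 q.2.1 q.2.2)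
    (hflip : ∀ᵐ t ∂(volume.restrict (Icc a b)), ∀ x₁ x₂ : Vec n, ∀ u₁ ∈ U t, ∀ u₂ ∈ U t,
      ‖f t x₁ u₁ - f t x₂ u₂‖ ≤ kx * ‖x₁ - x₂‖ + ku * ‖u₁ - u₂‖)
    (hgraph : MeasurableSet {q : ℝ × Vec k | q.1 ∈ Icc a b ∧ q.2 ∈ U q.1})
    (hUclosed : ∀ t, IsClosed (U t))
    (c : ℝ) (hc : 0 < c)
    (hbdd : ∀ᵐ t ∂(volume.restrict (Icc a b)), ∀ w ∈ U t, ‖w‖ ≤ c)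
    (xa : Vec n) (Eb : Set (Vec n)) (hEb : IsClosed Eb)
    (xstar : ℝ → Vec n) (hxstar : Continuous xstar)
    (ε : ℝ) (hε : 0 < ε)
    -- `l` is Lipschitz of rank `k_l` on the `ε`-ball around `x*(b)`
    (l : Vec n → ℝ) (kl : ℝ) (hkl : 0 ≤ kl)
    (hl : ∀ y z : Vec n, ‖y - xstar b‖ ≤ ε → ‖z - xstar b‖ ≤ ε →
      |l y - l z| ≤ kl * ‖y - z‖)
    -- assumption (A3) on `h`
    (h : ℝ → Vec n → ℝ) (kh : ℝ) (hkh : 0 < kh)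
    (hht : ∀ x : Vec n, ContinuousOn (fun t => h t x) (Icc a b))
    (hhx : ∀ t ∈ Icc a b, LipschitzWith (Real.toNNReal kh) (fun x : Vec n => h t x))
    (i : ℕ)
    -- two elements of `W` with their trajectories
    (u v : ℝ → Vec k) (xu xu' xv xv' : ℝ → Vec n)
    (hu : InW a b f U xa Eb xstar ε u xu xu')
    (hv : InW a b f U xa Eb xstar ε v xv xv') :
    |(l (xu b) + (i : ℝ) * ∫ t in a..b, max 0 (h t (xu t))) -
      (l (xv b) + (i : ℝ) * ∫ t in a..b, max 0 (h t (xv t)))| ≤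
      (kl + (i : ℝ) * kh * (b - a)) * Real.exp (kx * (b - a)) * ku *
        ∫ t in a..b, ‖u t - v t‖ :=
  penalized_cost_lipschitz_general a b hab f U kx ku hkx hku hflip c hbdd xa Eb xstar ε l kl hkl hl
    h kh hkh hht hhx i u v xu xu' xv xv' hu hv
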